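/- The constant 1/1152 in the third-order Simpson bound is best possible: for every constant C such that |T_φ(a,b)| ≤ C(M₃-m₃)(b-a)³ holds for all C³ functions φ on all intervals [a,b], one has C ≥ 1/1152. Specifically, the function d defined by d(x) = -x³/6 - x/3 for x ≤ -1, d(x) = x⁴/24 + x²/4 - x/6 + 1/24 for -1 ≤ x ≤ 1, and d(x) = x³/6 for x ≥ 1 is C³ with m₃ = -1, M₃ = 1 on any [-A,A] with A > 1, and |T_d(-A,A)| / ((M₃-m₃)(2A)³) → 1/1152 as A → ∞. -/

import Mathlib

/-!
The third derivative of `dFun` is the clipped identity `max (-1) (min x 1)`, so `m₃ = -1` and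
`M₃ = 1` on every interval. Writing `x₊ = max x 0`, one has
`dFun x = ((x + 1)₊⁴ - (x - 1)₊⁴) / 24 - x³ / 6 - x / 3`, whose derivatives and antiderivative are
again truncated powers plus polynomials. On `[-A, A]` this gives
`T_d(-A, A) / (2 (2A)³) = 1/1152 - 1/(576 A²) + 1/(576 A³) - 1/(1920 A⁴)`, and the assumed bound
`|T_d| ≤ 2 C (2A)³` then forces `C ≥ 1/1152` in the limit `A → ∞`.
-/

/-- The piecewise function used to show sharpness of the constant 1/1152. -/
noncomputable def dFun : ℝ → ℝ := fun x =>
  if x ≤ -1 then -x ^ 3 / 6 - x / 3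
  else if x ≤ 1 then x ^ 4 / 24 + x ^ 2 / 4 - x / 6 + 1 / 24
  else x ^ 3 / 6

open Filter Set Topology

section ThirdDerivative

variable {𝕜 F : Type*} [NontriviallyNormedField 𝕜] [NormedAddCommGroup F] [NormedSpace 𝕜 F]
  {f f₁ f₂ f₃ : 𝕜 → F}

theorem iteratedDeriv_three_eq_of_hasDerivAt (h₁ : ∀ x, HasDerivAt f (f₁ x) x)
    (h₂ : ∀ x, HasDerivAt f₁ (f₂ x) x) (h₃ : ∀ x, HasDerivAt f₂ (f₃ x) x) :
    iteratedDeriv 3 f = f₃ := by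
  rw [iteratedDeriv_succ', iteratedDeriv_succ', iteratedDeriv_one,
    funext fun x => (h₁ x).deriv, funext fun x => (h₂ x).deriv, funext fun x => (h₃ x).deriv]

theorem contDiff_three_of_hasDerivAt (h₁ : ∀ x, HasDerivAt f (f₁ x) x)
    (h₂ : ∀ x, HasDerivAt f₁ (f₂ x) x) (h₃ : ∀ x, HasDerivAt f₂ (f₃ x) x)
    (hf₃ : Continuous f₃) : ContDiff 𝕜 3 f := by
  have step : ∀ {g g' : 𝕜 → F} {n : ℕ}, (∀ x, HasDerivAt g (g' x) x) → ContDiff 𝕜 n g' →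
      ContDiff 𝕜 (n + 1) g := fun hg hg' => by
    rw [contDiff_succ_iff_deriv]
    exact ⟨fun x => (hg x).differentiableAt, by simp, by rwa [funext fun x => (hg x).deriv]⟩
  exact step h₁ (step h₂ (step h₃ (contDiff_zero.2 hf₃)))

end ThirdDerivative

section TruncatedPower

noncomputable def truncPow (n : ℕ) (x : ℝ) : ℝ := max x 0 ^ n

theorem truncPow_of_nonneg (n : ℕ) {x : ℝ} (hx : 0 ≤ x) : truncPow n x = x ^ n := by
  rw [truncPow, max_eq_left hx]

theorem truncPow_of_nonpos {n : ℕ} (hn : n ≠ 0) {x : ℝ} (hx : x ≤ 0) : truncPow n x = 0 := by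
  rw [truncPow, max_eq_right hx, zero_pow hn]

theorem continuous_truncPow (n : ℕ) : Continuous (truncPow n) := by
  unfold truncPow
  fun_prop

theorem hasDerivAt_truncPow (n : ℕ) (x : ℝ) :
    HasDerivAt (truncPow (n + 2)) ((n + 2) * truncPow (n + 1) x) x := by
  have hpow : ∀ y : ℝ, HasDerivAt (fun y => y ^ (n + 2)) ((n + 2) * y ^ (n + 1)) y := fun y => by
    simpa using hasDerivAt_pow (n + 2) y
  rcases lt_trichotomy x 0 with hx | rfl | hx
  · have hzero : truncPow (n + 2) =ᶠ[𝓝 x] fun _ => 0 := by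
      filter_upwards [Iio_mem_nhds hx] with y hy using truncPow_of_nonpos (by omega) hy.le
    rw [truncPow_of_nonpos n.succ_ne_zero hx.le, mul_zero]
    exact (hasDerivAt_const x 0).congr_of_eventuallyEq hzero
  · have hl : HasDerivWithinAt (truncPow (n + 2)) 0 (Iic 0) 0 :=
      (hasDerivWithinAt_const 0 _ 0).congr_of_mem
        (fun y hy => truncPow_of_nonpos (by omega) hy) self_mem_Iic
    have hr : HasDerivWithinAt (truncPow (n + 2)) 0 (Ici 0) 0 := by
      have h := (hpow 0).hasDerivWithinAt (s := Ici 0)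
      rw [zero_pow n.succ_ne_zero, mul_zero] at h
      exact h.congr_of_mem (fun y hy => truncPow_of_nonneg _ hy) self_mem_Ici
    have h := hl.union hr
    rw [Iic_union_Ici, hasDerivWithinAt_univ] at h
    simpa [truncPow] using h
  · have hpos : truncPow (n + 2) =ᶠ[𝓝 x] fun y => y ^ (n + 2) := by
      filter_upwards [Ioi_mem_nhds hx] with y hy using truncPow_of_nonneg _ hy.le
    rw [truncPow_of_nonneg _ hx.le]
    exact (hpow x).congr_of_eventuallyEq hpos

theorem hasDerivAt_truncPow_shift_sub (n : ℕ) (x : ℝ) :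
    HasDerivAt (fun y => truncPow (n + 2) (y + 1) - truncPow (n + 2) (y - 1))
      ((n + 2) * (truncPow (n + 1) (x + 1) - truncPow (n + 1) (x - 1))) x := by
  rw [mul_sub]
  exact ((hasDerivAt_truncPow n (x + 1)).comp_add_const x 1).sub
    ((hasDerivAt_truncPow n (x - 1)).comp_sub_const x 1)

end TruncatedPower

section ExtremalFunction

theorem dFun_eq_truncPow :
    dFun = fun x => (truncPow 4 (x + 1) - truncPow 4 (x - 1)) / 24 - x ^ 3 / 6 - x / 3 := by
  funext x
  unfold dFun
  split_ifs with h₁ h₂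
  · rw [truncPow_of_nonpos (by norm_num) (by linarith),
      truncPow_of_nonpos (by norm_num) (by linarith)]
    ring
  · rw [truncPow_of_nonneg _ (by linarith), truncPow_of_nonpos (by norm_num) (by linarith)]
    ring
  · rw [truncPow_of_nonneg _ (by linarith), truncPow_of_nonneg _ (by linarith)]
    ring

theorem hasDerivAt_dFun (x : ℝ) :
    HasDerivAt dFun ((truncPow 3 (x + 1) - truncPow 3 (x - 1)) / 6 - x ^ 2 / 2 - 1 / 3) x := by
  rw [dFun_eq_truncPow]
  refine ((((hasDerivAt_truncPow_shift_sub 2 x).div_const 24).sub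
    ((hasDerivAt_pow 3 x).div_const 6)).sub ((hasDerivAt_id' x).div_const 3)).congr_deriv ?_
  push_cast
  ring

theorem hasDerivAt_dFun_deriv (x : ℝ) :
    HasDerivAt (fun x => (truncPow 3 (x + 1) - truncPow 3 (x - 1)) / 6 - x ^ 2 / 2 - 1 / 3)
      ((truncPow 2 (x + 1) - truncPow 2 (x - 1)) / 2 - x) x := by
  refine ((((hasDerivAt_truncPow_shift_sub 1 x).div_const 6).sub
    ((hasDerivAt_pow 2 x).div_const 2)).sub_const (1 / 3)).congr_deriv ?_
  push_cast
  ring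

theorem hasDerivAt_dFun_deriv_deriv (x : ℝ) :
    HasDerivAt (fun x => (truncPow 2 (x + 1) - truncPow 2 (x - 1)) / 2 - x)
      (truncPow 1 (x + 1) - truncPow 1 (x - 1) - 1) x := by
  refine (((hasDerivAt_truncPow_shift_sub 0 x).div_const 2).sub (hasDerivAt_id' x)).congr_deriv ?_
  push_cast
  ring

theorem contDiff_dFun : ContDiff ℝ 3 dFun :=
  contDiff_three_of_hasDerivAt hasDerivAt_dFun hasDerivAt_dFun_deriv hasDerivAt_dFun_deriv_deriv
    (by have := continuous_truncPow 1; fun_prop)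

theorem iteratedDeriv_three_dFun_mem_Icc (x : ℝ) : iteratedDeriv 3 dFun x ∈ Icc (-1) 1 := by
  rw [iteratedDeriv_three_eq_of_hasDerivAt hasDerivAt_dFun hasDerivAt_dFun_deriv
    hasDerivAt_dFun_deriv_deriv]
  simp only [truncPow, pow_one, mem_Icc]
  have hmono : max (x - 1) 0 ≤ max (x + 1) 0 := max_le_max (by linarith) le_rfl
  have hlip : max (x + 1) 0 ≤ max (x - 1) 0 + 2 :=
    max_le (by linarith [le_max_left (x - 1) 0]) (by linarith [le_max_right (x - 1) 0])
  constructor <;> linarith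

theorem integral_dFun {A : ℝ} (hA : 1 ≤ A) :
    ∫ t in (-A)..A, dFun t = A ^ 4 / 12 + A ^ 2 / 6 + 1 / 60 := by
  have hF : ∀ x, HasDerivAt
      (fun x => (truncPow 5 (x + 1) - truncPow 5 (x - 1)) / 120 - x ^ 4 / 24 - x ^ 2 / 6)
      (dFun x) x := fun x => by
    rw [dFun_eq_truncPow]
    refine ((((hasDerivAt_truncPow_shift_sub 3 x).div_const 120).sub
      ((hasDerivAt_pow 4 x).div_const 24)).sub ((hasDerivAt_pow 2 x).div_const 6)).congr_deriv ?_
    push_cast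
    ring
  rw [intervalIntegral.integral_eq_sub_of_hasDerivAt (fun x _ => hF x)
    (contDiff_dFun.continuous.intervalIntegrable _ _)]
  rw [truncPow_of_nonneg _ (by linarith), truncPow_of_nonneg _ (by linarith),
    truncPow_of_nonpos (by norm_num) (by linarith), truncPow_of_nonpos (by norm_num) (by linarith)]
  ring

theorem simpsonError_dFun {A : ℝ} (hA : 1 < A) :
    (dFun (-A) + dFun A) / 6 + 2 / 3 * dFun 0 - (1 / (2 * A)) * ∫ t in (-A)..A, dFun t =
      (1 - (-1)) * (2 * A) ^ 3 *
        (1 / 1152 - A⁻¹ ^ 2 / 576 + A⁻¹ ^ 3 / 576 - A⁻¹ ^ 4 / 1920) := by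
  have hneg : dFun (-A) = A ^ 3 / 6 + A / 3 := by
    rw [dFun, if_pos (by linarith)]
    ring
  have hpos : dFun A = A ^ 3 / 6 := by
    rw [dFun, if_neg (by linarith), if_neg (by linarith)]
  have hzero : dFun 0 = 1 / 24 := by norm_num [dFun]
  rw [hneg, hpos, hzero, integral_dFun hA.le]
  field_simp
  ring

theorem tendsto_simpsonError_dFun :
    Tendsto
      (fun A : ℝ =>
        |(dFun (-A) + dFun A) / 6 + 2 / 3 * dFun 0 - (1 / (2 * A)) * ∫ t in (-A)..A, dFun t| /
          ((1 - (-1)) * (2 * A) ^ 3))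
      atTop (𝓝 (1 / 1152)) := by
  have hlim : Tendsto (fun u : ℝ => |1 / 1152 - u ^ 2 / 576 + u ^ 3 / 576 - u ^ 4 / 1920|)
      (𝓝 0) (𝓝 (1 / 1152)) :=
    Continuous.tendsto' (by fun_prop) _ _ (by norm_num)
  refine (hlim.comp tendsto_inv_atTop_zero).congr' ?_
  filter_upwards [eventually_gt_atTop 1] with A hA
  have hden : 0 < (1 - (-1)) * (2 * A) ^ 3 := by positivity
  rw [simpsonError_dFun hA, abs_mul, abs_of_pos hden, mul_div_cancel_left₀ _ hden.ne']
  rfl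

end ExtremalFunction

theorem simpson_stmt9 (C : ℝ)
    (hC : ∀ (a b : ℝ), a < b → ∀ φ : ℝ → ℝ, ContDiff ℝ 3 φ →
      ∀ m₃ M₃ : ℝ,
        (∀ x ∈ Set.Icc a b, m₃ ≤ iteratedDeriv 3 φ x ∧ iteratedDeriv 3 φ x ≤ M₃) →
        |(φ a + φ b) / 6 + 2 / 3 * φ ((a + b) / 2) - (1 / (b - a)) * ∫ t in a..b, φ t| ≤
          C * (M₃ - m₃) * (b - a) ^ 3) :
    C ≥ 1 / 1152 ∧
      (ContDiff ℝ 3 dFun ∧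
        (∀ A : ℝ, 1 < A →
          (∀ x ∈ Set.Icc (-A) A, -1 ≤ iteratedDeriv 3 dFun x ∧ iteratedDeriv 3 dFun x ≤ 1)) ∧
        Filter.Tendsto
          (fun A : ℝ =>
            |(dFun (-A) + dFun A) / 6 + 2 / 3 * dFun 0 - (1 / (2 * A)) * ∫ t in (-A)..A, dFun t| /
              ((1 - (-1)) * (2 * A) ^ 3))
          Filter.atTop (nhds (1 / 1152))) := by
  have hd₃ := iteratedDeriv_three_dFun_mem_Icc
  refine ⟨le_of_tendsto tendsto_simpsonError_dFun ?_, contDiff_dFun, fun A _ x _ => hd₃ x,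
    tendsto_simpsonError_dFun⟩
  filter_upwards [eventually_gt_atTop 0] with A hA
  have hT := hC (-A) A (by linarith) dFun contDiff_dFun (-1) 1 fun x _ => hd₃ x
  rw [show (-A + A) / 2 = 0 by ring, show A - -A = 2 * A by ring] at hT
  rw [div_le_iff₀ (by positivity)]
  linarith
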